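/- arXiv:2403.06983 — 3 statements merged into one kernel-verified Lean document; each statement's English description precedes it below -/
import Mathlib

section
/- Let D = diag(λ₁,…,λ_d) with λ₁ > … > λ_d > 0, let v ∈ ℝ^d have only nonzero entries, set V = max(d^{-1/2}, ‖v‖_∞), let A = D + √D v vᵀ √D with eigenvalues ν₁ ≥ … ≥ ν_d, and for i ∈ {1,…,d} let e_i be a unit eigenvector of A for ν_i. Then for every i and every ρ ∈ (0,1), the constant C_i determined by [e_i]_j = C_i √λ_j [v]_j/(λ_j − ν_i) for all j satisfies |C_i| ≤ (d−i+1) V √λ_i · max(2(1−ρ)^{-1/2}, 2ρ^{-1}(d−i+1)V²). -/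
open Matrix Finset

/-!
With `u = √D v` the matrix is `A = D + u uᵀ`, and the eigen-equation turns into the secular
equation `∑ₖ u_k² / (λ_k − ν_i) = −1`. The secular function increases strictly between its poles,
so any two distinct eigenvalues are separated by some `λ_k`; by induction this gives the
interlacing `ν_i < λ_k` for `k < i`. The terms `k < i` of the secular sum are therefore positive,
so `∑_{k ≥ i} u_k t_k ≤ −1` for `t_k = u_k / (λ_k − ν_i)`, and Cauchy–Schwarz together with
`C_i² ‖t‖² = ‖e_i‖² = 1` yields `C_i² ≤ ∑_{k ≥ i} u_k² ≤ (d − i) λ_i V²`. The claimed bound is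
weaker, since `d − i ≥ 1` and the maximum in it is at least `2`.
-/

/-- The sup norm `‖v‖_∞ = max_j |[v]_j|` of a vector `v ∈ ℝ^d`, `d > 0`. -/
noncomputable def supNorm {d : ℕ} (hd : 0 < d) (v : Fin d → ℝ) : ℝ :=
  Finset.univ.sup' (Finset.univ_nonempty_iff.mpr (Fin.pos_iff_nonempty.mp hd))
    fun j => |v j|

theorem lt_of_forall_exists_mem_Ioo {ι α : Type*} [LinearOrder ι] [WellFoundedLT ι] [Preorder α]
    {lam ν : ι → α} (hlam : Antitone lam)
    (hgap : ∀ ⦃k i⦄, k < i → ∃ l, lam l ∈ Set.Ioo (ν i) (ν k)) {k i : ι} (hki : k < i) :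
    ν i < lam k := by
  induction k using WellFoundedLT.induction generalizing i with
  | ind k ih =>
    obtain ⟨l, hil, hlk⟩ := hgap hki
    have hkl : k ≤ l := not_lt.1 fun hlk' => (ih l hlk' hlk').not_gt hlk
    exact hil.trans_le (hlam hkl)

section Secular

variable {K : Type*} [Field K] [LinearOrder K] [IsStrictOrderedRing K]

theorem div_sub_lt_div_sub {w l x y : K} (hw : 0 < w) (hxy : x < y) (hl : l < x ∨ y < l) :
    w / (l - x) < w / (l - y) := by
  have hx : l - x ≠ 0 := by rcases hl with hl | hl <;> linarith
  have hy : l - y ≠ 0 := by rcases hl with hl | hl <;> linarith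
  have hpos : 0 < (l - x) * (l - y) := by rcases hl with hl | hl <;> nlinarith
  have hdiff : w / (l - y) - w / (l - x) = w * (y - x) / ((l - x) * (l - y)) := by
    field_simp
    ring
  linarith [div_pos (mul_pos hw (sub_pos.2 hxy)) hpos]

variable {ι : Type*} [Fintype ι] {w lam : ι → K}

def secular (w lam : ι → K) (x : K) : K := ∑ k, w k / (lam k - x)

theorem secular_lt_secular [Nonempty ι] (hw : ∀ k, 0 < w k) {x y : K} (hxy : x < y)
    (hlam : ∀ k, lam k < x ∨ y < lam k) : secular w lam x < secular w lam y :=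
  Finset.sum_lt_sum_of_nonempty Finset.univ_nonempty fun k _ =>
    div_sub_lt_div_sub (hw k) hxy (hlam k)

theorem exists_mem_Ioo_of_secular_eq [Nonempty ι] (hw : ∀ k, 0 < w k) {x y : K} (hxy : x < y)
    (hx : ∀ k, lam k ≠ x) (hy : ∀ k, lam k ≠ y) (h : secular w lam x = secular w lam y) :
    ∃ k, lam k ∈ Set.Ioo x y := by
  by_contra! hgap
  refine (secular_lt_secular hw hxy fun k => ?_).ne h
  rcases (hx k).lt_or_gt with hk | hk
  · exact .inl hk
  · exact .inr ((not_lt.1 fun hky => hgap k ⟨hk, hky⟩).lt_of_ne' (hy k))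

theorem lt_of_lt_of_forall_secular_eq [LinearOrder ι] [WellFoundedLT ι] [Nonempty ι]
    {ν : ι → K} {s : K} (hw : ∀ k, 0 < w k) (hlam : Antitone lam)
    (hν : StrictAnti ν) (hpole : ∀ i k, lam k ≠ ν i) (hsec : ∀ i, secular w lam (ν i) = s)
    {k i : ι} (hki : k < i) : ν i < lam k :=
  lt_of_forall_exists_mem_Ioo hlam (fun k i hki => exists_mem_Ioo_of_secular_eq hw (hν hki)
    (hpole i) (hpole k) ((hsec i).trans (hsec k).symm)) hki

end Secular

theorem diagonal_mul_vecMulVec_mul_diagonal {m n R : Type*} [Fintype m] [DecidableEq m]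
    [Fintype n] [DecidableEq n] [CommSemiring R] (a : m → R) (b : n → R) (v : m → R)
    (w : n → R) : diagonal a * vecMulVec v w * diagonal b = vecMulVec (a * v) (b * w) := by
  ext i j
  simp only [mul_diagonal, diagonal_mul, vecMulVec_apply, Pi.mul_apply]
  ring

theorem dotProduct_smul_smul_sq {ι R : Type*} [Fintype ι] [CommRing R] (c c' : R) (t : ι → R) :
    ((c • t) ⬝ᵥ (c' • t)) ^ 2 = ((c • t) ⬝ᵥ (c • t)) * ((c' • t) ⬝ᵥ (c' • t)) := by
  simp only [smul_dotProduct, dotProduct_smul, smul_eq_mul]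
  ring

theorem injective_of_orthonormal_of_eq_smul {κ ι α R : Type*} [DecidableEq κ] [Fintype ι]
    [CommRing R] [Nontrivial R] {e : κ → ι → R} {C : κ → R} {f : α → ι → R} {ν : κ → α}
    (horth : ∀ i j, e i ⬝ᵥ e j = if i = j then (1 : R) else 0) (he : ∀ i, e i = C i • f (ν i)) :
    Function.Injective ν := by
  intro a b hab
  by_contra hab'
  have hpar := dotProduct_smul_smul_sq (C a) (C b) (f (ν a))
  rw [← he a, hab, ← he b, horth, horth, horth, if_neg hab', if_pos rfl, if_pos rfl] at hpar
  simp at hpar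

section RankOneUpdate

variable {K ι : Type*} [Field K] [LinearOrder K] [IsStrictOrderedRing K] [Fintype ι] [DecidableEq ι]
  {lam u x : ι → K} {μ : K}

theorem sub_mul_eq_of_mulVec_eq (h : (diagonal lam + vecMulVec u u) *ᵥ x = μ • x) (k : ι) :
    (lam k - μ) * x k = -(u k * (u ⬝ᵥ x)) := by
  have hk := congrFun h k
  simp only [add_mulVec, mulVec_diagonal, vecMulVec_mulVec, Pi.add_apply, Pi.smul_apply,
    smul_eq_mul, MulOpposite.smul_eq_mul_unop, MulOpposite.unop_op] at hk
  linear_combination hk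

theorem apply_ne_of_mulVec_eq (hlam : Function.Injective lam) (hu : ∀ k, u k ≠ 0) (hx : x ≠ 0)
    (h : (diagonal lam + vecMulVec u u) *ᵥ x = μ • x) (k : ι) : lam k ≠ μ := by
  intro hk
  have hs : u ⬝ᵥ x = 0 := by
    have hk' := sub_mul_eq_of_mulVec_eq h k
    rw [hk, sub_self, zero_mul, eq_comm, neg_eq_zero] at hk'
    exact (mul_eq_zero.1 hk').resolve_left (hu k)
  have hoff : ∀ l ≠ k, x l = 0 := fun l hl => by
    have hl' := sub_mul_eq_of_mulVec_eq h l
    rw [hs, mul_zero, neg_zero] at hl'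
    exact (mul_eq_zero.1 hl').resolve_left (sub_ne_zero.2 fun h' => hl (hlam (h'.trans hk.symm)))
  have hxk : x k = 0 := by
    rw [dotProduct, Finset.sum_eq_single k (fun l _ hl => by rw [hoff l hl, mul_zero])
      (by simp)] at hs
    exact (mul_eq_zero.1 hs).resolve_left (hu k)
  exact hx (funext fun l => if hl : l = k then hl ▸ hxk else hoff l hl)

theorem secular_eq_neg_one_of_mulVec_eq (h : (diagonal lam + vecMulVec u u) *ᵥ x = μ • x)
    (hx : x ≠ 0) (hpole : ∀ k, lam k ≠ μ) : secular (fun k => u k ^ 2) lam μ = -1 := by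
  set s := u ⬝ᵥ x
  have hxk : ∀ k, x k = -(u k * s) / (lam k - μ) := fun k => by
    rw [← sub_mul_eq_of_mulVec_eq h k, mul_div_cancel_left₀ _ (sub_ne_zero.2 (hpole k))]
  have hs : s ≠ 0 := fun hs => hx (funext fun k => by simp [hxk k, hs])
  have hself : s = -(s * secular (fun k => u k ^ 2) lam μ) :=
    calc s = ∑ k, u k * x k := rfl
      _ = ∑ k, -(s * (u k ^ 2 / (lam k - μ))) := by
        refine Finset.sum_congr rfl fun k _ => ?_
        rw [hxk k]
        ring
      _ = -(s * secular (fun k => u k ^ 2) lam μ) := by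
        rw [secular, Finset.mul_sum, Finset.sum_neg_distrib]
  exact mul_left_cancel₀ hs (by linarith)

theorem sq_le_sum_of_secular_eq_neg_one (T : Finset ι)
    (hsec : secular (fun k => u k ^ 2) lam μ = -1) (hT : ∀ k ∉ T, μ < lam k) {c : K}
    (hc : (c • fun k => u k / (lam k - μ)) ⬝ᵥ (c • fun k => u k / (lam k - μ)) = 1) :
    c ^ 2 ≤ ∑ k ∈ T, u k ^ 2 := by
  set t : ι → K := fun k => u k / (lam k - μ)
  have hterm : ∀ k, u k * t k = u k ^ 2 / (lam k - μ) := fun k => by ring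
  have hout : 0 ≤ ∑ k ∈ Tᶜ, u k * t k := Finset.sum_nonneg fun k hk => by
    rw [hterm]
    exact div_nonneg (sq_nonneg _) (sub_pos.2 (hT k (Finset.mem_compl.1 hk))).le
  have hin : ∑ k ∈ T, u k * t k ≤ -1 := by
    have hall : ∑ k, u k * t k = -1 := by
      rw [← hsec]
      exact Finset.sum_congr rfl fun k _ => hterm k
    rw [← Finset.sum_add_sum_compl T] at hall
    linarith
  have htt : ∑ k ∈ T, t k ^ 2 ≤ t ⬝ᵥ t := by
    simp only [dotProduct, ← sq]
    exact Finset.sum_le_sum_of_subset_of_nonneg (Finset.subset_univ T) fun k _ _ => sq_nonneg _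
  have hct : c ^ 2 * (t ⬝ᵥ t) = 1 := by
    rw [← hc, smul_dotProduct, dotProduct_smul, smul_eq_mul, smul_eq_mul]
    ring
  have hone : 1 ≤ (∑ k ∈ T, u k ^ 2) * (t ⬝ᵥ t) :=
    calc 1 ≤ (∑ k ∈ T, u k * t k) ^ 2 := by nlinarith
      _ ≤ (∑ k ∈ T, u k ^ 2) * ∑ k ∈ T, t k ^ 2 := Finset.sum_mul_sq_le_sq_mul_sq T u t
      _ ≤ (∑ k ∈ T, u k ^ 2) * (t ⬝ᵥ t) :=
        mul_le_mul_of_nonneg_left htt (Finset.sum_nonneg fun k _ => sq_nonneg _)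
  calc c ^ 2 = c ^ 2 * 1 := (mul_one _).symm
    _ ≤ c ^ 2 * ((∑ k ∈ T, u k ^ 2) * (t ⬝ᵥ t)) := mul_le_mul_of_nonneg_left hone (sq_nonneg c)
    _ = ∑ k ∈ T, u k ^ 2 := by rw [mul_left_comm, hct, mul_one]

end RankOneUpdate

theorem abs_le_supNorm {d : ℕ} (hd : 0 < d) (v : Fin d → ℝ) (j : Fin d) : |v j| ≤ supNorm hd v :=
  Finset.le_sup' (fun j => |v j|) (mem_univ j)

theorem sum_Ici_sq_sqrt_mul_le {d : ℕ} {lam v : Fin d → ℝ} {V : ℝ} (hlam : Antitone lam)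
    (hlam_pos : ∀ k, 0 ≤ lam k) (hv : ∀ k, |v k| ≤ V) (i : Fin d) :
    ∑ k ∈ Ici i, (√(lam k) * v k) ^ 2 ≤ ((d : ℝ) - (i : ℕ)) * lam i * V ^ 2 :=
  calc ∑ k ∈ Ici i, (√(lam k) * v k) ^ 2 ≤ ∑ k ∈ Ici i, lam i * V ^ 2 := by
        refine Finset.sum_le_sum fun k hk => ?_
        rw [mul_pow, Real.sq_sqrt (hlam_pos k), ← sq_abs (v k)]
        exact mul_le_mul (hlam (mem_Ici.1 hk)) (pow_le_pow_left₀ (abs_nonneg _) (hv k) 2)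
          (sq_nonneg _) (hlam_pos i)
    _ = ((d : ℝ) - (i : ℕ)) * lam i * V ^ 2 := by
        rw [sum_const, Fin.card_Ici, nsmul_eq_mul, Nat.cast_sub i.is_lt.le]
        ring

theorem one_le_two_mul_inv_sqrt_one_sub {ρ : ℝ} (hρ0 : 0 ≤ ρ) (hρ1 : ρ < 1) :
    1 ≤ 2 * (√(1 - ρ))⁻¹ := by
  have hinv : 1 ≤ (√(1 - ρ))⁻¹ :=
    (one_le_inv₀ (Real.sqrt_pos.2 (by linarith))).2 (Real.sqrt_le_one.2 (by linarith))
  linarith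

theorem abs_le_mul_sqrt_mul_of_sq_le {c D V l M : ℝ} (hD : 1 ≤ D) (hV : 0 ≤ V) (hl : 0 ≤ l)
    (hM : 1 ≤ M) (h : c ^ 2 ≤ D * l * V ^ 2) : |c| ≤ D * V * √l * M :=
  calc |c| = √(c ^ 2) := (Real.sqrt_sq_eq_abs c).symm
    _ ≤ √(D * l * V ^ 2) := Real.sqrt_le_sqrt h
    _ = √D * V * √l := by
      rw [Real.sqrt_mul (by positivity), Real.sqrt_sq hV, Real.sqrt_mul (by linarith)]
      ring
    _ ≤ D * V * √l := by gcongr; exact Real.sqrt_le_self_iff.2 (.inr hD)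
    _ ≤ D * V * √l * M := le_mul_of_one_le_right (by positivity) hM

/-- Indices are 0-based, so the factor `d − i + 1` of the paper (1-based `i`) becomes `d − i`. -/
theorem BNS_constant_bound
    {d : ℕ} (hd : 0 < d)
    (lam : Fin d → ℝ) (hlam_strict : StrictAnti lam) (hlam_pos : ∀ i, 0 < lam i)
    (v : Fin d → ℝ) (hv : ∀ j, v j ≠ 0)
    (V : ℝ) (hV : V = max (1 / Real.sqrt d) (supNorm hd v))
    (A : Matrix (Fin d) (Fin d) ℝ)
    (hA : A = Matrix.diagonal lam +
      (Matrix.diagonal fun i => Real.sqrt (lam i)) * Matrix.vecMulVec v v *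
      (Matrix.diagonal fun i => Real.sqrt (lam i)))
    (ν : Fin d → ℝ) (hν_anti : Antitone ν)
    (e : Fin d → Fin d → ℝ)
    (he_orth : ∀ i j, e i ⬝ᵥ e j = if i = j then (1 : ℝ) else 0)
    (he_eig : ∀ i, A.mulVec (e i) = ν i • e i)
    (C : Fin d → ℝ)
    (hC : ∀ i j : Fin d, e i j = C i * (Real.sqrt (lam j) * v j / (lam j - ν i))) :
    ∀ i : Fin d, ∀ ρ : ℝ, 0 < ρ → ρ < 1 →
      |C i| ≤ ((d : ℝ) - (i : ℕ)) * V * Real.sqrt (lam i) *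
        max (2 * (Real.sqrt (1 - ρ))⁻¹) (2 * ρ⁻¹ * ((d : ℝ) - (i : ℕ)) * V ^ 2) := by
  intro i ρ hρ0 hρ1
  set u : Fin d → ℝ := fun j => √(lam j) * v j
  have hu : ∀ j, u j ≠ 0 := fun j => mul_ne_zero (Real.sqrt_pos.2 (hlam_pos j)).ne' (hv j)
  have heig : ∀ i, (diagonal lam + vecMulVec u u) *ᵥ e i = ν i • e i := by
    rw [hA, diagonal_mul_vecMulVec_mul_diagonal] at he_eig
    exact he_eig
  have he : ∀ i, e i = C i • fun j => u j / (lam j - ν i) := fun i => funext (hC i)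
  have hnorm : ∀ i, e i ⬝ᵥ e i = 1 := fun i => by simpa using he_orth i i
  have hne : ∀ i, e i ≠ 0 := fun i h0 => by simpa [h0] using hnorm i
  have hpole : ∀ i k, lam k ≠ ν i := fun i =>
    apply_ne_of_mulVec_eq hlam_strict.injective hu (hne i) (heig i)
  have hsec : ∀ i, secular (fun k => u k ^ 2) lam (ν i) = -1 := fun i =>
    secular_eq_neg_one_of_mulVec_eq (heig i) (hne i) (hpole i)
  have hν : StrictAnti ν := hν_anti.strictAnti_of_injective
    (injective_of_orthonormal_of_eq_smul (f := fun μ j => u j / (lam j - μ)) he_orth he)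
  have : Nonempty (Fin d) := ⟨i⟩
  have hCi : C i ^ 2 ≤ ∑ k ∈ Ici i, u k ^ 2 :=
    sq_le_sum_of_secular_eq_neg_one (Ici i) (hsec i)
      (fun k hk => lt_of_lt_of_forall_secular_eq (fun j => sq_pos_of_ne_zero (hu j))
        hlam_strict.antitone hν hpole hsec (by simpa using hk)) (he i ▸ hnorm i)
  have hsum := sum_Ici_sq_sqrt_mul_le hlam_strict.antitone (fun k => (hlam_pos k).le)
    (fun k => hV ▸ le_max_of_le_right (abs_le_supNorm hd v k)) i
  have hdi : (1 : ℝ) ≤ (d : ℝ) - (i : ℕ) := by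
    linarith [show ((i : ℕ) : ℝ) + 1 ≤ d by exact_mod_cast i.is_lt]
  exact abs_le_mul_sqrt_mul_of_sq_le hdi (hV ▸ le_max_of_le_left (by positivity))
    (hlam_pos i).le (le_max_of_le_left (one_le_two_mul_inv_sqrt_one_sub hρ0.le hρ1))
    (hCi.trans hsum)
end

section
/- Let D = diag(λ₁,…,λ_d) with λ₁ ≥ … ≥ λ_d > 0, let v^{(1)},…,v^{(m)} ∈ ℝ^d, and let A^{(m)} = D + √D (Σ_{k=1}^m v^{(k)}(v^{(k)})ᵀ) √D with eigenvalues ν₁ ≥ … ≥ ν_d. Then for every i ∈ {1,…,d}, λ_i ≤ ν_i ≤ λ_i · (1 + m d · max_{k=1,…,m} ‖v^{(k)}‖_∞²). -/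
/-!
If `xᵀMx ≤ xᵀNx` for all `x` and `M`, `N` have orthonormal eigenbases with eigenvalues
`μ₁ ≥ … ≥ μ_d` and `ν₁ ≥ … ≥ ν_d`, then `μᵢ ≤ νᵢ`: by dimension count the span of the first `i`
eigenvectors of `M` meets the span of the last `d - i + 1` eigenvectors of `N` in some `x ≠ 0`,
and `μᵢ |x|² ≤ xᵀMx ≤ xᵀNx ≤ νᵢ |x|²`. With `B = √D` we have `D = BᵀB` and
`xᵀAx = xᵀDx + Σₖ ⟨v⁽ᵏ⁾, Bx⟩²`, so Cauchy–Schwarz gives `D ≤ A ≤ (1 + Σₖ |v⁽ᵏ⁾|²) D` as quadratic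
forms, and `|v⁽ᵏ⁾|² ≤ d ‖v⁽ᵏ⁾‖²_∞`.
-/

open Matrix Finset

open Module Submodule

/-- Orthonormality for the dot product: `n → ℝ` itself carries the sup norm. -/
def DotOrthonormal {ι n : Type*} [Fintype n] [DecidableEq ι] (g : ι → n → ℝ) : Prop :=
  ∀ i j, g i ⬝ᵥ g j = if i = j then 1 else 0

namespace DotOrthonormal

variable {ι κ n : Type*} [Fintype n] [DecidableEq ι] [DecidableEq κ]
  {g : ι → n → ℝ} {h : κ → n → ℝ}

theorem sum_smul_dotProduct (hg : DotOrthonormal g) {s : Finset ι} {i : ι} (hi : i ∈ s)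
    (c : ι → ℝ) : (∑ j ∈ s, c j • g j) ⬝ᵥ g i = c i := by
  simp [sum_dotProduct, smul_dotProduct, hg _ i, hi]

theorem linearIndependent (hg : DotOrthonormal g) : LinearIndependent ℝ g :=
  linearIndependent_iff'.2 fun s c hc i hi => by
    simpa [hc] using (hg.sum_smul_dotProduct hi c).symm

theorem finrank_span_image (hg : DotOrthonormal g) (s : Finset ι) :
    finrank ℝ (span ℝ (g '' s)) = #s := by
  rw [Set.image_eq_range]
  exact (finrank_span_eq_card (hg.linearIndependent.comp _ Subtype.val_injective)).trans (by simp)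

theorem eq_sum_of_mem_span (hg : DotOrthonormal g) {s : Finset ι} {x : n → ℝ}
    (hx : x ∈ span ℝ (g '' s)) : x = ∑ j ∈ s, (x ⬝ᵥ g j) • g j := by
  induction hx using span_induction with
  | mem y hy =>
    obtain ⟨k, hk, rfl⟩ := hy
    simp [hg k, show k ∈ s from hk]
  | zero => simp
  | add x y _ _ hx hy =>
    conv_lhs => rw [hx, hy]
    simp only [add_dotProduct, add_smul, sum_add_distrib]
  | smul a x _ hx =>
    conv_lhs => rw [hx]
    simp only [smul_dotProduct, smul_assoc, smul_sum]

theorem dotProduct_mulVec_of_mem_span (hg : DotOrthonormal g) {M : Matrix n n ℝ} {μ : ι → ℝ}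
    (hM : ∀ j, M *ᵥ g j = μ j • g j) {s : Finset ι} {x : n → ℝ}
    (hx : x ∈ span ℝ (g '' s)) : x ⬝ᵥ (M *ᵥ x) = ∑ j ∈ s, μ j * (x ⬝ᵥ g j) ^ 2 := by
  nth_rewrite 2 [hg.eq_sum_of_mem_span hx]
  simp only [mulVec_sum, mulVec_smul, hM, dotProduct_sum, dotProduct_smul, smul_eq_mul]
  exact sum_congr rfl fun j _ => by ring

theorem dotProduct_self_of_mem_span (hg : DotOrthonormal g) {s : Finset ι} {x : n → ℝ}
    (hx : x ∈ span ℝ (g '' s)) : x ⬝ᵥ x = ∑ j ∈ s, (x ⬝ᵥ g j) ^ 2 := by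
  classical
  simpa using hg.dotProduct_mulVec_of_mem_span (M := 1) (μ := 1) (by simp) hx

theorem exists_ne_zero_mem_span_inf (hg : DotOrthonormal g) (hh : DotOrthonormal h)
    (s : Finset ι) (t : Finset κ) (hst : Fintype.card n < #s + #t) :
    ∃ x ≠ 0, x ∈ span ℝ (g '' s) ∧ x ∈ span ℝ (h '' t) := by
  by_contra! hdisj
  have := finrank_add_finrank_le_of_disjoint
    (disjoint_def.2 fun x hxs hxt => not_not.1 fun hx => hdisj x hx hxs hxt)
  rw [hg.finrank_span_image, hh.finrank_span_image, finrank_fintype_fun_eq_card] at this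
  omega

theorem mul_dotProduct_self_le_of_mem_span (hg : DotOrthonormal g) {M : Matrix n n ℝ}
    {μ : ι → ℝ} (hM : ∀ j, M *ᵥ g j = μ j • g j) {s : Finset ι} {a : ℝ}
    (hμ : ∀ j ∈ s, a ≤ μ j) {x : n → ℝ} (hx : x ∈ span ℝ (g '' s)) :
    a * (x ⬝ᵥ x) ≤ x ⬝ᵥ (M *ᵥ x) := by
  rw [hg.dotProduct_mulVec_of_mem_span hM hx, hg.dotProduct_self_of_mem_span hx, mul_sum]
  exact sum_le_sum fun j hj => mul_le_mul_of_nonneg_right (hμ j hj) (sq_nonneg _)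

theorem dotProduct_mulVec_le_of_mem_span (hg : DotOrthonormal g) {M : Matrix n n ℝ}
    {μ : ι → ℝ} (hM : ∀ j, M *ᵥ g j = μ j • g j) {s : Finset ι} {a : ℝ}
    (hμ : ∀ j ∈ s, μ j ≤ a) {x : n → ℝ} (hx : x ∈ span ℝ (g '' s)) :
    x ⬝ᵥ (M *ᵥ x) ≤ a * (x ⬝ᵥ x) := by
  rw [hg.dotProduct_mulVec_of_mem_span hM hx, hg.dotProduct_self_of_mem_span hx, mul_sum]
  exact sum_le_sum fun j hj => mul_le_mul_of_nonneg_right (hμ j hj) (sq_nonneg _)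

theorem eigenvalue_le_of_dotProduct_mulVec_le {d : ℕ} {M N : Matrix (Fin d) (Fin d) ℝ}
    {g h : Fin d → Fin d → ℝ} {μ ν : Fin d → ℝ} (hg : DotOrthonormal g)
    (hh : DotOrthonormal h) (hM : ∀ j, M *ᵥ g j = μ j • g j)
    (hN : ∀ j, N *ᵥ h j = ν j • h j) (hμ : Antitone μ) (hν : Antitone ν)
    (hMN : ∀ x, x ⬝ᵥ (M *ᵥ x) ≤ x ⬝ᵥ (N *ᵥ x)) (i : Fin d) : μ i ≤ ν i := by
  obtain ⟨x, hx0, hxg, hxh⟩ := hg.exists_ne_zero_mem_span_inf hh (Iic i) (Ici i) (by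
    simp only [Fintype.card_fin, Fin.card_Iic, Fin.card_Ici]; omega)
  have hxx : 0 < x ⬝ᵥ x := by simpa using dotProduct_star_self_pos_iff.2 hx0
  refine le_of_mul_le_mul_right ?_ hxx
  calc μ i * (x ⬝ᵥ x) ≤ x ⬝ᵥ (M *ᵥ x) :=
        hg.mul_dotProduct_self_le_of_mem_span hM (fun j hj => hμ (mem_Iic.1 hj)) hxg
    _ ≤ x ⬝ᵥ (N *ᵥ x) := hMN x
    _ ≤ ν i * (x ⬝ᵥ x) :=
        hh.dotProduct_mulVec_le_of_mem_span hN (fun j hj => hν (mem_Ici.1 hj)) hxh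

end DotOrthonormal

theorem dotOrthonormal_single (n : Type*) [Fintype n] [DecidableEq n] :
    DotOrthonormal fun j : n => (Pi.single j 1 : n → ℝ) := fun i j => by
  simp [Pi.single_apply, eq_comm]

theorem diagonal_mulVec_single_one {n : Type*} [Fintype n] [DecidableEq n] (w : n → ℝ) (j : n) :
    diagonal w *ᵥ Pi.single j 1 = w j • Pi.single j 1 := by
  ext k
  simp [Pi.single_apply]

section QuadraticForm

variable {ι n : Type*} [Fintype ι] [Fintype n]

theorem transpose_diagonal_sqrt_mul_self {w : n → ℝ} [DecidableEq n] (hw : 0 ≤ w) :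
    (diagonal fun i => √(w i))ᵀ * diagonal (fun i => √(w i)) = diagonal w := by
  simp [diagonal_mul_diagonal, Real.mul_self_sqrt (hw _)]

theorem dotProduct_transpose_mul_mulVec (B C : Matrix n n ℝ) (x : n → ℝ) :
    x ⬝ᵥ ((Bᵀ * C) *ᵥ x) = (B *ᵥ x) ⬝ᵥ (C *ᵥ x) := by
  rw [← mulVec_mulVec, dotProduct_mulVec, vecMul_transpose]

theorem dotProduct_sum_vecMulVec_mulVec (v : ι → n → ℝ) (y : n → ℝ) :
    y ⬝ᵥ ((∑ k, vecMulVec (v k) (v k)) *ᵥ y) = ∑ k, (v k ⬝ᵥ y) ^ 2 := by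
  simp [sum_mulVec, vecMulVec_mulVec, dotProduct_comm y, sum_dotProduct, sq]

theorem dotProduct_add_sum_vecMulVec_mulVec (B : Matrix n n ℝ) (v : ι → n → ℝ) (x : n → ℝ) :
    x ⬝ᵥ ((Bᵀ * B + Bᵀ * (∑ k, vecMulVec (v k) (v k)) * B) *ᵥ x) =
      x ⬝ᵥ ((Bᵀ * B) *ᵥ x) + ∑ k, (v k ⬝ᵥ (B *ᵥ x)) ^ 2 := by
  rw [add_mulVec, dotProduct_add, Matrix.mul_assoc, dotProduct_transpose_mul_mulVec,
    dotProduct_transpose_mul_mulVec, ← mulVec_mulVec, dotProduct_sum_vecMulVec_mulVec]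

theorem dotProduct_mulVec_le_add_sum_vecMulVec (B : Matrix n n ℝ) (v : ι → n → ℝ)
    (x : n → ℝ) :
    x ⬝ᵥ ((Bᵀ * B) *ᵥ x) ≤ x ⬝ᵥ ((Bᵀ * B + Bᵀ * (∑ k, vecMulVec (v k) (v k)) * B) *ᵥ x) := by
  rw [dotProduct_add_sum_vecMulVec_mulVec]
  exact le_add_of_nonneg_right (sum_nonneg fun k _ => sq_nonneg _)

theorem dotProduct_add_sum_vecMulVec_mulVec_le (B : Matrix n n ℝ) (v : ι → n → ℝ) {C : ℝ}
    (hC : ∑ k, v k ⬝ᵥ v k ≤ C) (x : n → ℝ) :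
    x ⬝ᵥ ((Bᵀ * B + Bᵀ * (∑ k, vecMulVec (v k) (v k)) * B) *ᵥ x) ≤
      (1 + C) * (x ⬝ᵥ ((Bᵀ * B) *ᵥ x)) := by
  have hBx : 0 ≤ (B *ᵥ x) ⬝ᵥ (B *ᵥ x) := by simpa using dotProduct_star_self_nonneg (B *ᵥ x)
  rw [dotProduct_add_sum_vecMulVec_mulVec, dotProduct_transpose_mul_mulVec, add_mul, one_mul]
  gcongr
  calc ∑ k, (v k ⬝ᵥ (B *ᵥ x)) ^ 2 ≤ ∑ k, (v k ⬝ᵥ v k) * ((B *ᵥ x) ⬝ᵥ (B *ᵥ x)) :=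
        sum_le_sum fun k _ => by
          simpa only [dotProduct, sq] using sum_mul_sq_le_sq_mul_sq univ (v k) (B *ᵥ x)
    _ ≤ C * ((B *ᵥ x) ⬝ᵥ (B *ᵥ x)) := by rw [← sum_mul]; gcongr

end QuadraticForm

theorem sq_le_supNorm_sq {d : ℕ} (hd : 0 < d) (w : Fin d → ℝ) (j : Fin d) :
    w j ^ 2 ≤ supNorm hd w ^ 2 := by
  rw [← sq_abs]
  exact pow_le_pow_left₀ (abs_nonneg _) (le_sup' (fun j => |w j|) (mem_univ j)) 2

theorem dotProduct_self_le_card_mul_supNorm_sq {d : ℕ} (hd : 0 < d) (w : Fin d → ℝ) :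
    w ⬝ᵥ w ≤ d * supNorm hd w ^ 2 := by
  simpa [dotProduct, ← sq] using sum_le_sum fun j (_ : j ∈ univ) => sq_le_supNorm_sq hd w j

theorem sum_dotProduct_self_le {d m : ℕ} (hd : 0 < d) (hm : 0 < m) (v : Fin m → Fin d → ℝ) :
    ∑ k, v k ⬝ᵥ v k ≤ m * d *
      univ.sup' (univ_nonempty_iff.mpr (Fin.pos_iff_nonempty.mp hm))
        (fun k => supNorm hd (v k) ^ 2) := by
  calc ∑ k, v k ⬝ᵥ v k
      ≤ ∑ _k : Fin m, d * univ.sup' (univ_nonempty_iff.mpr (Fin.pos_iff_nonempty.mp hm))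
          (fun k => supNorm hd (v k) ^ 2) :=
        sum_le_sum fun k _ => (dotProduct_self_le_card_mul_supNorm_sq hd (v k)).trans
          (by gcongr; exact le_sup' (fun k => supNorm hd (v k) ^ 2) (mem_univ k))
    _ = _ := by simp [mul_assoc]

/-- **Relative eigenvalue bounds for a perturbation by a sum of m rank-one matrices:**
`λᵢ ≤ νᵢ ≤ λᵢ (1 + m d max_k ‖v⁽ᵏ⁾‖_∞²)`. -/
theorem eigenvalue_bounds_rank_m
    {d m : ℕ} (hd : 0 < d) (hm : 0 < m)
    (lam : Fin d → ℝ) (hlam_anti : Antitone lam) (hlam_pos : ∀ i, 0 < lam i)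
    (v : Fin m → Fin d → ℝ)
    (A : Matrix (Fin d) (Fin d) ℝ)
    (hA : A = Matrix.diagonal lam +
      (Matrix.diagonal fun i => Real.sqrt (lam i)) *
        (∑ k, Matrix.vecMulVec (v k) (v k)) *
      (Matrix.diagonal fun i => Real.sqrt (lam i)))
    (ν : Fin d → ℝ) (hν_anti : Antitone ν)
    (e : Fin d → Fin d → ℝ)
    (he_orth : ∀ i j, e i ⬝ᵥ e j = if i = j then (1 : ℝ) else 0)
    (he_eig : ∀ i, A.mulVec (e i) = ν i • e i) :
    ∀ i : Fin d,
      lam i ≤ ν i ∧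
      ν i ≤ lam i * (1 + (m : ℝ) * (d : ℝ) *
        Finset.univ.sup' (Finset.univ_nonempty_iff.mpr (Fin.pos_iff_nonempty.mp hm))
          (fun k => supNorm hd (v k) ^ 2)) := by
  set c := univ.sup' (univ_nonempty_iff.mpr (Fin.pos_iff_nonempty.mp hm))
    (fun k => supNorm hd (v k) ^ 2)
  set B : Matrix (Fin d) (Fin d) ℝ := diagonal fun i => √(lam i)
  have hBB : Bᵀ * B = diagonal lam := transpose_diagonal_sqrt_mul_self fun i => (hlam_pos i).le
  have hA' : A = Bᵀ * B + Bᵀ * (∑ k, vecMulVec (v k) (v k)) * B := by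
    rw [hA, hBB, diagonal_transpose]
  have hc : 0 ≤ 1 + m * d * c := by
    have : 0 ≤ c := le_sup'_of_le _ (mem_univ ⟨0, hm⟩) (sq_nonneg _)
    positivity
  have hstd := dotOrthonormal_single (Fin d)
  intro i
  constructor
  · refine hstd.eigenvalue_le_of_dotProduct_mulVec_le he_orth (diagonal_mulVec_single_one lam)
      he_eig hlam_anti hν_anti (fun x => ?_) i
    rw [← hBB, hA']
    exact dotProduct_mulVec_le_add_sum_vecMulVec B v x
  · rw [mul_comm]
    refine DotOrthonormal.eigenvalue_le_of_dotProduct_mulVec_le he_orth hstd he_eig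
      (diagonal_mulVec_single_one _) hν_anti (hlam_anti.const_mul hc) (fun x => ?_) i
    calc x ⬝ᵥ (A *ᵥ x) ≤ (1 + m * d * c) * (x ⬝ᵥ ((Bᵀ * B) *ᵥ x)) := by
          rw [hA']
          exact dotProduct_add_sum_vecMulVec_mulVec_le B v (sum_dotProduct_self_le hd hm v) x
      _ = x ⬝ᵥ (diagonal (fun j => (1 + m * d * c) * lam j) *ᵥ x) := by
          simp only [hBB, mulVec_diagonal, dotProduct, mul_sum]
          exact sum_congr rfl fun j _ => by ring
end

section
/- Let D = diag(λ₁,…,λ_d) with λ₁ ≥ … ≥ λ_d > 0, let A be a d×d symmetric matrix with A ⪰ D (that is, A − D is positive semidefinite), let ν₁ ≥ … ≥ ν_d be the eigenvalues of A and (e₁,…,e_d) a corresponding orthonormal system of eigenvectors. Suppose there is a constant C ≥ 0 such that |[e_i]_j| ≤ C · √(min(λ_i,λ_j)/max(λ_i,λ_j)) for all i,j. Then for every v ∈ ℝ^d with ‖v‖_∞ ≤ V and every i ∈ {1,…,d}, |⟨√D v, e_i⟩| ≤ d V C · √(ν_i). -/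
open Matrix Finset

/-!
The heart of the matter is the Weyl-type comparison `λᵢ ≤ νᵢ`. The coefficient vectors
supported on `{k ≥ i}` form a space of dimension `d - i`, and asking that `∑ cₖ eₖ` vanish
on the `d - 1 - i` coordinates `j > i` leaves a nonzero solution `x`. Then
`λᵢ ‖x‖² ≤ ⟨D x, x⟩ ≤ ⟨A x, x⟩ ≤ νᵢ ‖x‖²`. Given this, each of the `d` terms
`√λⱼ vⱼ [eᵢ]ⱼ` is at most `V C √(λⱼ min(λᵢ,λⱼ)/max(λᵢ,λⱼ)) ≤ V C √λᵢ ≤ V C √νᵢ`.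
-/

theorem exists_ne_zero_sum_smul_eq_zero_on {ι n : Type*} [Fintype ι] (e : ι → n → ℝ)
    (s : Finset ι) (t : Finset n) (h : #s + #t < Fintype.card ι) :
    ∃ c : ι → ℝ, c ≠ 0 ∧ (∀ k ∈ s, c k = 0) ∧ ∀ j ∈ t, (∑ k, c k • e k) j = 0 := by
  let f : (ι → ℝ) →ₗ[ℝ] (s → ℝ) × (t → ℝ) :=
    (LinearMap.pi fun k : s => LinearMap.proj k.1).prod
      (LinearMap.pi fun j : t => (LinearMap.proj j.1).comp (Fintype.linearCombination ℝ e))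
  obtain ⟨c, hc, hc0⟩ :=
    (Submodule.ne_bot_iff _).mp (LinearMap.ker_ne_bot_of_finrank_lt (f := f) (by simpa using h))
  refine ⟨c, hc0, fun k hk => ?_, fun j hj => ?_⟩
  · exact congrFun (congrArg Prod.fst hc) ⟨k, hk⟩
  · simpa [f, Fintype.linearCombination_apply] using congrFun (congrArg Prod.snd hc) ⟨j, hj⟩

section Orthonormal

variable {ι n : Type*} [Fintype ι] [Fintype n] [DecidableEq ι] {e : ι → n → ℝ}

theorem sum_smul_dotProduct_sum_smul (he : ∀ k l, e k ⬝ᵥ e l = if k = l then 1 else 0)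
    (c b : ι → ℝ) : (∑ k, c k • e k) ⬝ᵥ (∑ k, b k • e k) = ∑ k, c k * b k := by
  simp [sum_dotProduct, dotProduct_sum, dotProduct_smul, smul_dotProduct, he, mul_comm]

theorem dotProduct_mulVec_le_of_mulVec_eq_smul
    (he : ∀ k l, e k ⬝ᵥ e l = if k = l then 1 else 0) {A : Matrix n n ℝ} {ν : ι → ℝ}
    (he_eig : ∀ k, A *ᵥ e k = ν k • e k) {c : ι → ℝ} {μ : ℝ} (hc : ∀ k, c k ≠ 0 → ν k ≤ μ) :
    (∑ k, c k • e k) ⬝ᵥ A *ᵥ (∑ k, c k • e k) ≤ μ * ((∑ k, c k • e k) ⬝ᵥ (∑ k, c k • e k)) := by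
  have hA : A *ᵥ (∑ k, c k • e k) = ∑ k, (ν k * c k) • e k := by
    simp [mulVec_sum, mulVec_smul, he_eig, smul_smul, mul_comm]
  rw [hA, sum_smul_dotProduct_sum_smul he, sum_smul_dotProduct_sum_smul he, mul_sum]
  refine sum_le_sum fun k _ => ?_
  rcases eq_or_ne (c k) 0 with h | h
  · simp [h]
  · nlinarith [hc k h, mul_self_nonneg (c k)]

end Orthonormal

theorem mul_dotProduct_le_dotProduct_diagonal_mulVec {n : Type*} [Fintype n] [DecidableEq n]
    {lam x : n → ℝ} {μ : ℝ} (hx : ∀ j, x j ≠ 0 → μ ≤ lam j) :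
    μ * (x ⬝ᵥ x) ≤ x ⬝ᵥ diagonal lam *ᵥ x := by
  simp only [dotProduct, mulVec_diagonal, mul_sum]
  refine sum_le_sum fun j _ => ?_
  rcases eq_or_ne (x j) 0 with h | h
  · simp [h]
  · nlinarith [hx j h, mul_self_nonneg (x j)]

theorem le_eigenvalue_of_posSemidef_sub_diagonal {d : ℕ} {lam : Fin d → ℝ} (hlam : Antitone lam)
    {A : Matrix (Fin d) (Fin d) ℝ} (hAD : (A - diagonal lam).PosSemidef)
    {ν : Fin d → ℝ} (hν : Antitone ν) {e : Fin d → Fin d → ℝ}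
    (he : ∀ k l, e k ⬝ᵥ e l = if k = l then 1 else 0)
    (he_eig : ∀ k, A *ᵥ e k = ν k • e k) (i : Fin d) : lam i ≤ ν i := by
  obtain ⟨c, hc0, hc_lt, hx_gt⟩ :=
    exists_ne_zero_sum_smul_eq_zero_on e (Iio i) (Ioi i) (by simp; omega)
  set x := ∑ k, c k • e k
  have hxx : 0 < x ⬝ᵥ x := by
    obtain ⟨k, hk⟩ := Function.ne_iff.mp hc0
    rw [sum_smul_dotProduct_sum_smul he]
    exact sum_pos' (fun l _ => mul_self_nonneg _) ⟨k, mem_univ k, mul_self_pos.mpr hk⟩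
  have hD : lam i * (x ⬝ᵥ x) ≤ x ⬝ᵥ diagonal lam *ᵥ x :=
    mul_dotProduct_le_dotProduct_diagonal_mulVec fun j hj =>
      hlam (not_lt.mp fun h => hj (hx_gt j (mem_Ioi.mpr h)))
  have hA : x ⬝ᵥ A *ᵥ x ≤ ν i * (x ⬝ᵥ x) :=
    dotProduct_mulVec_le_of_mulVec_eq_smul he he_eig fun k hk =>
      hν (not_lt.mp fun h => hk (hc_lt k (mem_Iio.mpr h)))
  have hDA : x ⬝ᵥ diagonal lam *ᵥ x ≤ x ⬝ᵥ A *ᵥ x := by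
    simpa [sub_mulVec, dotProduct_sub] using hAD.dotProduct_mulVec_nonneg x
  exact le_of_mul_le_mul_right (hD.trans (hDA.trans hA)) hxx

theorem Real.sqrt_mul_sqrt_min_div_max_le {a b : ℝ} (ha : 0 < a) (hb : 0 ≤ b) :
    √b * √(min a b / max a b) ≤ √a := by
  rw [← Real.sqrt_mul hb]
  refine Real.sqrt_le_sqrt ?_
  rcases le_total a b with h | h
  · rw [min_eq_left h, max_eq_right h, mul_div_cancel₀ _ (ha.trans_le h).ne']
  · rw [min_eq_right h, max_eq_left h, ← mul_div_assoc, div_le_iff₀ ha]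
    exact mul_self_le_mul_self hb h

theorem inner_sqrtD_eigenvector_bound_general
    {d : ℕ}
    (lam : Fin d → ℝ) (hlam_anti : Antitone lam) (hlam_pos : ∀ i, 0 < lam i)
    (A : Matrix (Fin d) (Fin d) ℝ)
    (hAD : (A - Matrix.diagonal lam).PosSemidef)
    (ν : Fin d → ℝ) (hν_anti : Antitone ν)
    (e : Fin d → Fin d → ℝ)
    (he_orth : ∀ i j, e i ⬝ᵥ e j = if i = j then (1 : ℝ) else 0)
    (he_eig : ∀ i, A.mulVec (e i) = ν i • e i)
    (C : ℝ) (hC : 0 ≤ C)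
    (hbound : ∀ i j : Fin d,
      |e i j| ≤ C * Real.sqrt (min (lam i) (lam j) / max (lam i) (lam j)))
    (V : ℝ) (v : Fin d → ℝ) (hv : ∀ j, |v j| ≤ V) :
    ∀ i : Fin d,
      |(Matrix.diagonal fun j => Real.sqrt (lam j)).mulVec v ⬝ᵥ e i| ≤
        (d : ℝ) * V * C * Real.sqrt (ν i) := by
  intro i
  have hV : 0 ≤ V := (abs_nonneg _).trans (hv i)
  have hlam_le_ν : lam i ≤ ν i :=
    le_eigenvalue_of_posSemidef_sub_diagonal hlam_anti hAD hν_anti he_orth he_eig i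
  have hterm : ∀ j, |√(lam j) * v j * e i j| ≤ V * C * √(ν i) := fun j => calc
    |√(lam j) * v j * e i j| = √(lam j) * |v j| * |e i j| := by
      rw [abs_mul, abs_mul, abs_of_nonneg (Real.sqrt_nonneg _)]
    _ ≤ √(lam j) * V * (C * √(min (lam i) (lam j) / max (lam i) (lam j))) := by
      gcongr
      exacts [hv j, hbound i j]
    _ = V * C * (√(lam j) * √(min (lam i) (lam j) / max (lam i) (lam j))) := by ring
    _ ≤ V * C * √(lam i) := by
      gcongr
      exact Real.sqrt_mul_sqrt_min_div_max_le (hlam_pos i) (hlam_pos j).le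
    _ ≤ V * C * √(ν i) := by gcongr
  calc |(diagonal fun j => √(lam j)) *ᵥ v ⬝ᵥ e i| = |∑ j, √(lam j) * v j * e i j| := by
        simp only [dotProduct, mulVec_diagonal]
    _ ≤ ∑ j, |√(lam j) * v j * e i j| := abs_sum_le_sum_abs _ _
    _ ≤ ∑ _j : Fin d, V * C * √(ν i) := sum_le_sum fun j _ => hterm j
    _ = d * V * C * √(ν i) := by simp [mul_assoc]

/-- If `A ⪰ D = diag(λ)` is symmetric with orthonormal eigenvectors `e` (eigenvalues
`ν` decreasing) satisfying `|[eᵢ]_j| ≤ C √(min(λᵢ,λⱼ)/max(λᵢ,λⱼ))`, then for any `v`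
with `‖v‖_∞ ≤ V`, `|⟨√D v, eᵢ⟩| ≤ d V C √νᵢ`. -/
theorem inner_sqrtD_eigenvector_bound
    {d : ℕ}
    (lam : Fin d → ℝ) (hlam_anti : Antitone lam) (hlam_pos : ∀ i, 0 < lam i)
    (A : Matrix (Fin d) (Fin d) ℝ) (hAsymm : A.IsSymm)
    (hAD : (A - Matrix.diagonal lam).PosSemidef)
    (ν : Fin d → ℝ) (hν_anti : Antitone ν)
    (e : Fin d → Fin d → ℝ)
    (he_orth : ∀ i j, e i ⬝ᵥ e j = if i = j then (1 : ℝ) else 0)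
    (he_eig : ∀ i, A.mulVec (e i) = ν i • e i)
    (C : ℝ) (hC : 0 ≤ C)
    (hbound : ∀ i j : Fin d,
      |e i j| ≤ C * Real.sqrt (min (lam i) (lam j) / max (lam i) (lam j)))
    (V : ℝ) (v : Fin d → ℝ) (hv : ∀ j, |v j| ≤ V) :
    ∀ i : Fin d,
      |(Matrix.diagonal fun j => Real.sqrt (lam j)).mulVec v ⬝ᵥ e i| ≤
        (d : ℝ) * V * C * Real.sqrt (ν i) :=
  inner_sqrtD_eigenvector_bound_general lam hlam_anti hlam_pos A hAD ν hν_anti e he_orth he_eig C hC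
    hbound V v hv
end
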